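/- Let α > −1 and α + β ≥ 1/2. There is a constant C = C(α,β) such that for every measurable f ≥ 0 on (0,∞) and every x > 0: Φ^{α,β}_{*,E} f(x) ≤ C ( L f(x) + H_{2α+β+1} f(4x) + x^β R(z ↦ z^{−β} f(z))(x) ), and Φ^{α,β}_{*,F} f(x) ≤ C ( χ_{{β ≥ 1}} H_{2α+2} f(2x) + χ_{{β < 1}} H_{2α+β+1} f(2x) + N_{2α+2} f(x) + T_{1−β} f(x) ). -/

import Mathlib

open MeasureTheory Set Filter
open scoped ENNReal NNReal

noncomputable def PhiE (a b t x z : ℝ) : ℝ :=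
  if |x - z| < t ∧ t < x + z then
    (x * z) ^ (-a - 1/2) * t ^ (-(2*a) - 2*b) * (t ^ 2 - (x - z) ^ 2) ^ (a + b - 1/2)
  else 0

noncomputable def PhiF (a b t x z : ℝ) : ℝ :=
  if x + z < t then t ^ (-(2*a) - 2*b) * (t ^ 2 - (x - z) ^ 2) ^ (b - 1) else 0

noncomputable def PhiStarE (a b : ℝ) (f : ℝ → ℝ) (x : ℝ) : ℝ≥0∞ :=
  ⨆ t ∈ Set.Ioi (0 : ℝ),
    ∫⁻ z in Set.Ioi (0 : ℝ), ENNReal.ofReal (PhiE a b t x z * f z * z ^ (2 * a + 1))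

noncomputable def PhiStarF (a b : ℝ) (f : ℝ → ℝ) (x : ℝ) : ℝ≥0∞ :=
  ⨆ t ∈ Set.Ioi (0 : ℝ),
    ∫⁻ z in Set.Ioi (0 : ℝ), ENNReal.ofReal (PhiF a b t x z * f z * z ^ (2 * a + 1))

noncomputable def locHL (f : ℝ → ℝ) (x : ℝ) : ℝ≥0∞ :=
  ⨆ t ∈ Set.Ioo (0 : ℝ) (x / 2),
    (ENNReal.ofReal (2 * t))⁻¹ * ∫⁻ z in Set.Icc (x - t) (x + t), ENNReal.ofReal |f z|

noncomputable def Hop (η : ℝ) (f : ℝ → ℝ) (x : ℝ) : ℝ≥0∞ :=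
  ENNReal.ofReal (x ^ (-η)) * ∫⁻ z in Set.Ioo (0 : ℝ) x, ENNReal.ofReal (z ^ (η - 1) * f z)

noncomputable def Rop (f : ℝ → ℝ) (x : ℝ) : ℝ≥0∞ :=
  ⨆ t ∈ Set.Ioi (2 * x),
    (ENNReal.ofReal (2 * x))⁻¹ * ∫⁻ z in Set.Icc (t - x) (t + x), ENNReal.ofReal |f z|

noncomputable def Nop (η : ℝ) (f : ℝ → ℝ) (x : ℝ) : ℝ≥0∞ :=
  ⨆ t ∈ Set.Ioi x,
    ENNReal.ofReal (t ^ (-η)) * ∫⁻ z in Set.Ioo (0 : ℝ) t, ENNReal.ofReal (z ^ (η - 1) * |f z|)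

noncomputable def Tmax (η : ℝ) (f : ℝ → ℝ) (x : ℝ) : ℝ≥0∞ :=
  ⨆ t ∈ Set.Ioi (2 * x),
    ∫⁻ z in Set.Ioo (t / 2) t, ENNReal.ofReal (z ^ (η - 1) * |f z| * (t - z + x) ^ (-η))

/-!
Fix `x > 0` and split the range of `t`. On `E` one has `0 ≤ t² - (x - z)² ≤ min (t², 4xz)`, and
the support condition localises `z`: for `t < x/2` to `[x - t, x + t]`, where the weighted kernel
`Φ_t(x, z) z^{2α+1}` is `≲ 1/t` (local maximal operator); for `x/2 ≤ t ≤ 3x` to `(0, 4x)`, where it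
is `≲ x^{-2α-β-1} z^{2α+β}` (Hardy operator); for `t > 3x` to `[t - x, t + x]`, where it is
`≲ x^{β-1} z^{-β}` (remote maximal operator).

On `F` the kernel vanishes unless `t > x`, and `t² - (x - z)² = (t - x + z)(t - z + x)`. For `β ≥ 1`
the upper bound `t²` gives the operator `N`. For `β < 1` the exponent `β - 1` is negative and the
lower bounds `4xz` (when `t ≤ 2x`), `t²/4` (when `t > 2x` and `z ≤ t/2`) and `(t/2)(t - z + x)`
(when `z > t/2`) give the Hardy operator, `N` and `T` respectively.
-/

lemma rpow_le_two_rpow_abs {r : ℝ} (c : ℝ) (h₁ : 1/2 ≤ r) (h₂ : r ≤ 2) : r ^ c ≤ 2 ^ |c| := by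
  rcases le_or_gt 0 c with hc | hc
  · rw [abs_of_nonneg hc]
    exact Real.rpow_le_rpow (by linarith) h₂ hc
  · calc r ^ c ≤ (1/2) ^ c := Real.rpow_le_rpow_of_nonpos (by norm_num) h₁ hc.le
      _ = 2 ^ |c| := by
        rw [abs_of_neg hc, one_div, Real.inv_rpow zero_le_two, Real.rpow_neg zero_le_two]

section Kernel

variable {a b t x z : ℝ}

lemma PhiE_mul_rpow_le_of_lt_half (hab : 1/2 ≤ a + b) (ht : 0 < t) (htx : t < x / 2)
    (hz : 0 < z) :
    PhiE a b t x z * z ^ (2*a + 1) ≤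
      (Icc (x - t) (x + t)).indicator (fun _ => 2 ^ (|a + 1/2| + 1) * (2*t)⁻¹) z := by
  rw [PhiE]
  split_ifs with h
  · obtain ⟨hxz, -⟩ := h
    rw [abs_lt] at hxz
    have hx : 0 < x := by linarith
    rw [indicator_of_mem (show z ∈ Icc (x - t) (x + t) from ⟨by linarith, by linarith⟩)]
    calc (x * z) ^ (-a - 1/2) * t ^ (-(2*a) - 2*b) * (t ^ 2 - (x - z) ^ 2) ^ (a + b - 1/2)
          * z ^ (2*a + 1)
        ≤ (x * z) ^ (-a - 1/2) * t ^ (-(2*a) - 2*b) * (t ^ 2) ^ (a + b - 1/2) * z ^ (2*a + 1) := by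
          have hP₀ : 0 ≤ t ^ 2 - (x - z) ^ 2 := by nlinarith
          have hP : t ^ 2 - (x - z) ^ 2 ≤ t ^ 2 := by nlinarith
          gcongr
      _ = 2 ^ (1:ℝ) * (z / x) ^ (a + 1/2) * (2*t) ^ (-1:ℝ) := by
          -- all bases are positive: after taking logarithms the identity is linear
          simp (disch := positivity) only [Real.rpow_def_of_pos, Real.log_mul, Real.log_div,
            Real.log_pow, ← Real.exp_add]
          ring_nf
      _ ≤ 2 ^ (1:ℝ) * 2 ^ |a + 1/2| * (2*t) ^ (-1:ℝ) := by
          gcongr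
          exact rpow_le_two_rpow_abs _ (by rw [le_div_iff₀ hx]; linarith)
            (by rw [div_le_iff₀ hx]; linarith)
      _ = _ := by rw [← Real.rpow_add two_pos, add_comm 1, Real.rpow_neg_one]
  · rw [zero_mul]
    exact indicator_apply_nonneg fun _ => by positivity

lemma PhiE_mul_rpow_le_of_le_three_mul (hab : 1/2 ≤ a + b) (hx : 0 < x) (htx : x / 2 ≤ t)
    (htx' : t ≤ 3 * x) (hz : 0 < z) :
    PhiE a b t x z * z ^ (2*a + 1) ≤ (Ioo 0 (4*x)).indicator
      (fun z => 2 ^ (2*a + 2*b) * 4 ^ (3*a + 2*b + 1/2)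
        * ((4*x) ^ (-(2*a + b + 1)) * z ^ (2*a + b + 1 - 1))) z := by
  rw [PhiE]
  split_ifs with h
  · obtain ⟨hxz, hxzt⟩ := h
    rw [abs_lt] at hxz
    have ht : 0 < t := by linarith
    rw [indicator_of_mem (show z ∈ Ioo 0 (4*x) from ⟨hz, by linarith⟩)]
    calc (x * z) ^ (-a - 1/2) * t ^ (-(2*a) - 2*b) * (t ^ 2 - (x - z) ^ 2) ^ (a + b - 1/2)
          * z ^ (2*a + 1)
        ≤ (x * z) ^ (-a - 1/2) * (x / 2) ^ (-(2*a) - 2*b) * (4 * (x * z)) ^ (a + b - 1/2)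
          * z ^ (2*a + 1) := by
          have hP₀ : 0 ≤ t ^ 2 - (x - z) ^ 2 := by nlinarith
          have hP : t ^ 2 - (x - z) ^ 2 ≤ 4 * (x * z) := by nlinarith
          have hT : t ^ (-(2*a) - 2*b) ≤ (x / 2) ^ (-(2*a) - 2*b) :=
            Real.rpow_le_rpow_of_nonpos (by positivity) htx (by linarith)
          gcongr
      _ = _ := by
          simp (disch := positivity) only [Real.rpow_def_of_pos, Real.log_mul, Real.log_div,
            ← Real.exp_add]
          ring_nf
  · rw [zero_mul]
    exact indicator_apply_nonneg fun _ => by positivity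

lemma PhiE_mul_rpow_le_of_three_mul_lt (hab : 1/2 ≤ a + b) (hx : 0 < x) (htx : 3 * x < t)
    (hz : 0 < z) :
    PhiE a b t x z * z ^ (2*a + 1) ≤ (Icc (t - x) (t + x)).indicator
      (fun z => 2 * 4 ^ (a + b - 1/2) * 2 ^ (2*a + 2*b) * (x ^ b * (2*x)⁻¹ * z ^ (-b))) z := by
  rw [PhiE]
  split_ifs with h
  · obtain ⟨hxz, hxzt⟩ := h
    rw [abs_lt] at hxz
    have ht : 0 < t := by linarith
    rw [indicator_of_mem (show z ∈ Icc (t - x) (t + x) from ⟨by linarith, by linarith⟩)]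
    have hP₀ : 0 ≤ t ^ 2 - (x - z) ^ 2 := by nlinarith
    have hP : t ^ 2 - (x - z) ^ 2 ≤ 4 * (x * z) := by nlinarith
    have hzt : z / t ≤ 2 := by rw [div_le_iff₀ ht]; linarith
    calc (x * z) ^ (-a - 1/2) * t ^ (-(2*a) - 2*b) * (t ^ 2 - (x - z) ^ 2) ^ (a + b - 1/2)
          * z ^ (2*a + 1)
        ≤ (x * z) ^ (-a - 1/2) * t ^ (-(2*a) - 2*b) * (4 * (x * z)) ^ (a + b - 1/2)
          * z ^ (2*a + 1) := by gcongr
      _ = 2 ^ (1:ℝ) * 4 ^ (a + b - 1/2) * (z / t) ^ (2*a + 2*b)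
          * (x ^ b * (2*x) ^ (-1:ℝ) * z ^ (-b)) := by
          simp (disch := positivity) only [Real.rpow_def_of_pos, Real.log_mul, Real.log_div,
            ← Real.exp_add]
          ring_nf
      _ ≤ 2 ^ (1:ℝ) * 4 ^ (a + b - 1/2) * 2 ^ (2*a + 2*b)
          * (x ^ b * (2*x) ^ (-1:ℝ) * z ^ (-b)) := by
          gcongr
          linarith
      _ = _ := by rw [Real.rpow_one, Real.rpow_neg_one]
  · rw [zero_mul]
    exact indicator_apply_nonneg fun _ => by positivity

lemma PhiF_mul_rpow_le_of_one_le (hb : 1 ≤ b) (hx : 0 < x) (hz : 0 < z) :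
    PhiF a b t x z * z ^ (2*a + 1) ≤
      (Ioo 0 t).indicator (fun z => t ^ (-(2*a + 2)) * z ^ (2*a + 2 - 1)) z := by
  rw [PhiF]
  split_ifs with h
  · have ht : 0 < t := by linarith
    rw [indicator_of_mem (show z ∈ Ioo 0 t from ⟨hz, by linarith⟩)]
    have hP₀ : 0 ≤ t ^ 2 - (x - z) ^ 2 := by nlinarith
    have hP : t ^ 2 - (x - z) ^ 2 ≤ t ^ 2 := by nlinarith
    calc t ^ (-(2*a) - 2*b) * (t ^ 2 - (x - z) ^ 2) ^ (b - 1) * z ^ (2*a + 1)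
        ≤ t ^ (-(2*a) - 2*b) * (t ^ 2) ^ (b - 1) * z ^ (2*a + 1) := by
          gcongr
      _ = _ := by
          simp (disch := positivity) only [Real.rpow_def_of_pos, Real.log_pow, ← Real.exp_add]
          ring_nf
  · rw [zero_mul]
    exact indicator_apply_nonneg fun hzt => by have : 0 < t := hz.trans hzt.2; positivity

lemma PhiF_mul_rpow_le_of_le_two_mul (hab : 0 ≤ a + b) (hb : b < 1) (hx : 0 < x) (hxt : x ≤ t)
    (htx : t ≤ 2 * x) (hz : 0 < z) :
    PhiF a b t x z * z ^ (2*a + 1) ≤ (Ioo 0 (2*x)).indicator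
      (fun z => 2 ^ (2*a + b + 1) * 4 ^ (b - 1)
        * ((2*x) ^ (-(2*a + b + 1)) * z ^ (2*a + b + 1 - 1))) z := by
  rw [PhiF]
  split_ifs with h
  · rw [indicator_of_mem (show z ∈ Ioo 0 (2*x) from ⟨hz, by linarith⟩)]
    have hP : 4 * (x * z) ≤ t ^ 2 - (x - z) ^ 2 := by nlinarith
    have hT : t ^ (-(2*a) - 2*b) ≤ x ^ (-(2*a) - 2*b) :=
      Real.rpow_le_rpow_of_nonpos hx hxt (by linarith)
    have hP' : (t ^ 2 - (x - z) ^ 2) ^ (b - 1) ≤ (4 * (x * z)) ^ (b - 1) :=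
      Real.rpow_le_rpow_of_nonpos (by positivity) hP (by linarith)
    have hP₀ : 0 < t ^ 2 - (x - z) ^ 2 := by nlinarith
    calc t ^ (-(2*a) - 2*b) * (t ^ 2 - (x - z) ^ 2) ^ (b - 1) * z ^ (2*a + 1)
        ≤ x ^ (-(2*a) - 2*b) * (4 * (x * z)) ^ (b - 1) * z ^ (2*a + 1) := by
          gcongr
      _ = _ := by
          simp (disch := positivity) only [Real.rpow_def_of_pos, Real.log_mul, ← Real.exp_add]
          ring_nf
  · rw [zero_mul]
    exact indicator_apply_nonneg fun _ => by positivity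

lemma PhiF_mul_rpow_le_of_le_half (hb : b < 1) (hx : 0 < x) (htx : 2 * x < t) (hz : 0 < z)
    (hzt : z ≤ t / 2) :
    PhiF a b t x z * z ^ (2*a + 1) ≤
      (Ioo 0 t).indicator (fun z => 2 ^ (2 - 2*b) * (t ^ (-(2*a + 2)) * z ^ (2*a + 2 - 1))) z := by
  have ht : 0 < t := by linarith
  rw [PhiF, indicator_of_mem (show z ∈ Ioo 0 t from ⟨hz, by linarith⟩)]
  split_ifs with h
  · have hP : (t / 2) * (t / 2) ≤ t ^ 2 - (x - z) ^ 2 := by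
      rw [show t ^ 2 - (x - z) ^ 2 = (t - x + z) * (t + x - z) by ring]
      exact mul_le_mul (by linarith) (by linarith) (by positivity) (by linarith)
    have hP' : (t ^ 2 - (x - z) ^ 2) ^ (b - 1) ≤ ((t / 2) * (t / 2)) ^ (b - 1) :=
      Real.rpow_le_rpow_of_nonpos (by positivity) hP (by linarith)
    calc t ^ (-(2*a) - 2*b) * (t ^ 2 - (x - z) ^ 2) ^ (b - 1) * z ^ (2*a + 1)
        ≤ t ^ (-(2*a) - 2*b) * ((t / 2) * (t / 2)) ^ (b - 1) * z ^ (2*a + 1) := by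
          gcongr
      _ = _ := by
          simp (disch := positivity) only [Real.rpow_def_of_pos, Real.log_mul, Real.log_div,
            ← Real.exp_add]
          ring_nf
  · rw [zero_mul]
    positivity

lemma PhiF_mul_rpow_le_of_half_lt (hb : b < 1) (hx : 0 < x) (ht : 0 < t) (hzt : t / 2 < z) :
    PhiF a b t x z * z ^ (2*a + 1) ≤ (Ioo (t / 2) t).indicator
      (fun z => 2 ^ (1 - b) * 2 ^ |2*a + b + 1|
        * (z ^ (1 - b - 1) * (t - z + x) ^ (-(1 - b)))) z := by
  have hz : 0 < z := by linarith
  rw [PhiF]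
  split_ifs with h
  · rw [indicator_of_mem (show z ∈ Ioo (t / 2) t from ⟨hzt, by linarith⟩)]
    have hP : (t / 2) * (t - z + x) ≤ t ^ 2 - (x - z) ^ 2 := by
      rw [show t ^ 2 - (x - z) ^ 2 = (t - x + z) * (t - z + x) by ring]
      exact mul_le_mul_of_nonneg_right (by linarith) (by linarith)
    have hP' : (t ^ 2 - (x - z) ^ 2) ^ (b - 1) ≤ ((t / 2) * (t - z + x)) ^ (b - 1) :=
      Real.rpow_le_rpow_of_nonpos (by nlinarith) hP (by linarith)
    have hxzt : 0 < t - z + x := by linarith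
    calc t ^ (-(2*a) - 2*b) * (t ^ 2 - (x - z) ^ 2) ^ (b - 1) * z ^ (2*a + 1)
        ≤ t ^ (-(2*a) - 2*b) * ((t / 2) * (t - z + x)) ^ (b - 1) * z ^ (2*a + 1) := by
          gcongr
      _ = 2 ^ (1 - b) * (z / t) ^ (2*a + b + 1) * (z ^ (1 - b - 1) * (t - z + x) ^ (-(1 - b))) := by
          simp (disch := positivity) only [Real.rpow_def_of_pos, Real.log_mul, Real.log_div,
            ← Real.exp_add]
          ring_nf
      _ ≤ _ := by
          gcongr
          exact rpow_le_two_rpow_abs _ (by rw [le_div_iff₀ ht]; linarith)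
            (by rw [div_le_iff₀ ht]; linarith)
  · rw [zero_mul]
    refine indicator_apply_nonneg fun hzt => ?_
    have : 0 < t - z + x := by linarith [hzt.2]
    positivity

end Kernel

lemma lintegral_ofReal_const_mul {α : Type*} [MeasurableSpace α] (μ : Measure α) {c : ℝ}
    (hc : 0 ≤ c) (g : α → ℝ) :
    ∫⁻ y, ENNReal.ofReal (c * g y) ∂μ = ENNReal.ofReal c * ∫⁻ y, ENNReal.ofReal (g y) ∂μ := by
  simp_rw [ENNReal.ofReal_mul hc]
  exact lintegral_const_mul' _ _ ENNReal.ofReal_ne_top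

lemma setLIntegral_ofReal_mul_le {α : Type*} [MeasurableSpace α] {μ : Measure α}
    {k m f g : α → ℝ} {D S : Set α} (hD : MeasurableSet D) (hS : MeasurableSet S)
    (hf : ∀ z, 0 ≤ f z) (hk : ∀ z ∈ D, k z * m z ≤ S.indicator g z) :
    ∫⁻ z in D, ENNReal.ofReal (k z * f z * m z) ∂μ ≤ ∫⁻ z in S, ENNReal.ofReal (g z * f z) ∂μ := by
  calc ∫⁻ z in D, ENNReal.ofReal (k z * f z * m z) ∂μ
      ≤ ∫⁻ z in D, S.indicator (fun z => ENNReal.ofReal (g z * f z)) z ∂μ := by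
        refine setLIntegral_mono' hD fun z hz => ?_
        have h := mul_le_mul_of_nonneg_right (hk z hz) (hf z)
        rw [← indicator_mul_left, mul_right_comm] at h
        calc ENNReal.ofReal (k z * f z * m z)
            ≤ ENNReal.ofReal (S.indicator (fun z => g z * f z) z) := ENNReal.ofReal_le_ofReal h
          _ = _ := (congrFun (indicator_comp_of_zero ENNReal.ofReal_zero) z).symm
    _ ≤ ∫⁻ z in S, ENNReal.ofReal (g z * f z) ∂μ := by
        rw [lintegral_indicator hS, Measure.restrict_restrict hS]
        exact lintegral_mono_set inter_subset_left

section Regimes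

variable {a b t x : ℝ} {f : ℝ → ℝ}

lemma lintegral_PhiE_le_locHL (hab : 1/2 ≤ a + b) (hf : ∀ z, 0 ≤ f z) (ht : 0 < t)
    (htx : t < x / 2) :
    ∫⁻ z in Ioi 0, ENNReal.ofReal (PhiE a b t x z * f z * z ^ (2*a + 1)) ≤
      ENNReal.ofReal (2 ^ (|a + 1/2| + 1)) * locHL f x := by
  calc _ ≤ ∫⁻ z in Icc (x - t) (x + t), ENNReal.ofReal (2 ^ (|a + 1/2| + 1) * (2*t)⁻¹ * f z) :=
        setLIntegral_ofReal_mul_le measurableSet_Ioi measurableSet_Icc hf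
          fun z hz => PhiE_mul_rpow_le_of_lt_half hab ht htx hz
    _ = ENNReal.ofReal (2 ^ (|a + 1/2| + 1)) * ((ENNReal.ofReal (2*t))⁻¹ *
          ∫⁻ z in Icc (x - t) (x + t), ENNReal.ofReal |f z|) := by
        rw [← ENNReal.ofReal_inv_of_pos (by positivity),
          ← lintegral_ofReal_const_mul _ (by positivity),
          ← lintegral_ofReal_const_mul _ (by positivity)]
        congr! 3 with z
        rw [abs_of_nonneg (hf z), mul_assoc]
    _ ≤ _ := by
        gcongr
        rw [locHL]
        exact le_iSup₂_of_le t ⟨ht, htx⟩ le_rfl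

lemma lintegral_PhiE_le_Hop (hab : 1/2 ≤ a + b) (hf : ∀ z, 0 ≤ f z) (hx : 0 < x)
    (htx : x / 2 ≤ t) (htx' : t ≤ 3 * x) :
    ∫⁻ z in Ioi 0, ENNReal.ofReal (PhiE a b t x z * f z * z ^ (2*a + 1)) ≤
      ENNReal.ofReal (2 ^ (2*a + 2*b) * 4 ^ (3*a + 2*b + 1/2)) * Hop (2*a + b + 1) f (4*x) := by
  calc _ ≤ ∫⁻ z in Ioo 0 (4*x), ENNReal.ofReal (2 ^ (2*a + 2*b) * 4 ^ (3*a + 2*b + 1/2)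
          * ((4*x) ^ (-(2*a + b + 1)) * z ^ (2*a + b + 1 - 1)) * f z) :=
        setLIntegral_ofReal_mul_le measurableSet_Ioi measurableSet_Ioo hf
          fun z hz => PhiE_mul_rpow_le_of_le_three_mul hab hx htx htx' hz
    _ = _ := by
        rw [Hop, ← lintegral_ofReal_const_mul _ (by positivity),
          ← lintegral_ofReal_const_mul _ (by positivity)]
        congr! 3 with z
        ring

lemma lintegral_PhiE_le_Rop (hab : 1/2 ≤ a + b) (hf : ∀ z, 0 ≤ f z) (hx : 0 < x)
    (htx : 3 * x < t) :
    ∫⁻ z in Ioi 0, ENNReal.ofReal (PhiE a b t x z * f z * z ^ (2*a + 1)) ≤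
      ENNReal.ofReal (2 * 4 ^ (a + b - 1/2) * 2 ^ (2*a + 2*b)) *
        (ENNReal.ofReal (x ^ b) * Rop (fun z => z ^ (-b) * f z) x) := by
  calc _ ≤ ∫⁻ z in Icc (t - x) (t + x), ENNReal.ofReal (2 * 4 ^ (a + b - 1/2) * 2 ^ (2*a + 2*b)
          * (x ^ b * (2*x)⁻¹ * z ^ (-b)) * f z) :=
        setLIntegral_ofReal_mul_le measurableSet_Ioi measurableSet_Icc hf
          fun z hz => PhiE_mul_rpow_le_of_three_mul_lt hab hx htx hz
    _ = ENNReal.ofReal (2 * 4 ^ (a + b - 1/2) * 2 ^ (2*a + 2*b)) * (ENNReal.ofReal (x ^ b) *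
          ((ENNReal.ofReal (2*x))⁻¹ *
            ∫⁻ z in Icc (t - x) (t + x), ENNReal.ofReal (z ^ (-b) * f z))) := by
        rw [← ENNReal.ofReal_inv_of_pos (by positivity),
          ← lintegral_ofReal_const_mul _ (by positivity),
          ← lintegral_ofReal_const_mul _ (by positivity),
          ← lintegral_ofReal_const_mul _ (by positivity)]
        congr! 3 with z
        ring
    _ ≤ _ := by
        gcongr
        rw [Rop]
        refine le_iSup₂_of_le t (show 2 * x < t by linarith) ?_
        gcongr with z
        exact le_abs_self _

lemma lintegral_PhiF_eq_zero (htx : t ≤ x) :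
    ∫⁻ z in Ioi 0, ENNReal.ofReal (PhiF a b t x z * f z * z ^ (2*a + 1)) = 0 := by
  refine (setLIntegral_congr_fun measurableSet_Ioi fun z (hz : 0 < z) => ?_).trans lintegral_zero
  rw [PhiF, if_neg (by linarith), zero_mul, zero_mul, ENNReal.ofReal_zero]

lemma lintegral_PhiF_le_Nop (hb : 1 ≤ b) (hf : ∀ z, 0 ≤ f z) (hx : 0 < x) (hxt : x < t) :
    ∫⁻ z in Ioi 0, ENNReal.ofReal (PhiF a b t x z * f z * z ^ (2*a + 1)) ≤ Nop (2*a + 2) f x := by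
  calc _ ≤ ∫⁻ z in Ioo 0 t, ENNReal.ofReal (t ^ (-(2*a + 2)) * z ^ (2*a + 2 - 1) * f z) :=
        setLIntegral_ofReal_mul_le measurableSet_Ioi measurableSet_Ioo hf
          fun z hz => PhiF_mul_rpow_le_of_one_le hb hx hz
    _ = ENNReal.ofReal (t ^ (-(2*a + 2))) *
          ∫⁻ z in Ioo 0 t, ENNReal.ofReal (z ^ (2*a + 2 - 1) * |f z|) := by
        rw [← lintegral_ofReal_const_mul _ (Real.rpow_nonneg (hx.trans hxt).le _)]
        congr! 3 with z
        rw [abs_of_nonneg (hf z), mul_assoc]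
    _ ≤ _ := by
        rw [Nop]
        exact le_iSup₂_of_le t hxt le_rfl

lemma lintegral_PhiF_le_Hop (hab : 0 ≤ a + b) (hb : b < 1) (hf : ∀ z, 0 ≤ f z) (hx : 0 < x)
    (hxt : x ≤ t) (htx : t ≤ 2 * x) :
    ∫⁻ z in Ioi 0, ENNReal.ofReal (PhiF a b t x z * f z * z ^ (2*a + 1)) ≤
      ENNReal.ofReal (2 ^ (2*a + b + 1) * 4 ^ (b - 1)) * Hop (2*a + b + 1) f (2*x) := by
  calc _ ≤ ∫⁻ z in Ioo 0 (2*x), ENNReal.ofReal (2 ^ (2*a + b + 1) * 4 ^ (b - 1)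
          * ((2*x) ^ (-(2*a + b + 1)) * z ^ (2*a + b + 1 - 1)) * f z) :=
        setLIntegral_ofReal_mul_le measurableSet_Ioi measurableSet_Ioo hf
          fun z hz => PhiF_mul_rpow_le_of_le_two_mul hab hb hx hxt htx hz
    _ = _ := by
        rw [Hop, ← lintegral_ofReal_const_mul _ (by positivity),
          ← lintegral_ofReal_const_mul _ (by positivity)]
        congr! 3 with z
        ring

lemma setLIntegral_Ioc_PhiF_le_Nop (hb : b < 1) (hf : ∀ z, 0 ≤ f z) (hx : 0 < x)
    (htx : 2 * x < t) :
    ∫⁻ z in Ioc 0 (t / 2), ENNReal.ofReal (PhiF a b t x z * f z * z ^ (2*a + 1)) ≤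
      ENNReal.ofReal (2 ^ (2 - 2*b)) * Nop (2*a + 2) f x := by
  calc _ ≤ ∫⁻ z in Ioo 0 t, ENNReal.ofReal
          (2 ^ (2 - 2*b) * (t ^ (-(2*a + 2)) * z ^ (2*a + 2 - 1)) * f z) :=
        setLIntegral_ofReal_mul_le measurableSet_Ioc measurableSet_Ioo hf
          fun z hz => PhiF_mul_rpow_le_of_le_half hb hx htx hz.1 hz.2
    _ = ENNReal.ofReal (2 ^ (2 - 2*b)) * (ENNReal.ofReal (t ^ (-(2*a + 2))) *
          ∫⁻ z in Ioo 0 t, ENNReal.ofReal (z ^ (2*a + 2 - 1) * |f z|)) := by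
        rw [← lintegral_ofReal_const_mul _ (Real.rpow_nonneg (by linarith) _),
          ← lintegral_ofReal_const_mul _ (by positivity)]
        congr! 3 with z
        rw [abs_of_nonneg (hf z)]
        ring
    _ ≤ _ := by
        gcongr
        rw [Nop]
        exact le_iSup₂_of_le t (show x < t by linarith) le_rfl

lemma setLIntegral_Ioi_PhiF_le_Tmax (hb : b < 1) (hf : ∀ z, 0 ≤ f z) (hx : 0 < x)
    (htx : 2 * x < t) :
    ∫⁻ z in Ioi (t / 2), ENNReal.ofReal (PhiF a b t x z * f z * z ^ (2*a + 1)) ≤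
      ENNReal.ofReal (2 ^ (1 - b) * 2 ^ |2*a + b + 1|) * Tmax (1 - b) f x := by
  calc _ ≤ ∫⁻ z in Ioo (t / 2) t, ENNReal.ofReal (2 ^ (1 - b) * 2 ^ |2*a + b + 1|
          * (z ^ (1 - b - 1) * (t - z + x) ^ (-(1 - b))) * f z) :=
        setLIntegral_ofReal_mul_le measurableSet_Ioi measurableSet_Ioo hf
          fun z hz => PhiF_mul_rpow_le_of_half_lt hb hx (by linarith) hz
    _ = ENNReal.ofReal (2 ^ (1 - b) * 2 ^ |2*a + b + 1|) * ∫⁻ z in Ioo (t / 2) t,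
          ENNReal.ofReal (z ^ (1 - b - 1) * |f z| * (t - z + x) ^ (-(1 - b))) := by
        rw [← lintegral_ofReal_const_mul _ (by positivity)]
        congr! 3 with z
        rw [abs_of_nonneg (hf z)]
        ring
    _ ≤ _ := by
        gcongr
        rw [Tmax]
        exact le_iSup₂_of_le t htx le_rfl

lemma lintegral_PhiF_le_Nop_add_Tmax (hb : b < 1) (hf : ∀ z, 0 ≤ f z) (hx : 0 < x)
    (htx : 2 * x < t) :
    ∫⁻ z in Ioi 0, ENNReal.ofReal (PhiF a b t x z * f z * z ^ (2*a + 1)) ≤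
      ENNReal.ofReal (2 ^ (2 - 2*b)) * Nop (2*a + 2) f x +
        ENNReal.ofReal (2 ^ (1 - b) * 2 ^ |2*a + b + 1|) * Tmax (1 - b) f x := by
  rw [← Ioc_union_Ioi_eq_Ioi (by linarith : (0:ℝ) ≤ t / 2),
    lintegral_union measurableSet_Ioi Ioc_disjoint_Ioi_same]
  exact add_le_add (setLIntegral_Ioc_PhiF_le_Nop hb hf hx htx)
    (setLIntegral_Ioi_PhiF_le_Tmax hb hf hx htx)

end Regimes

theorem PhiStarE_le {a b : ℝ} (hab : 1/2 ≤ a + b) :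
    ∃ C : ℝ≥0, ∀ f : ℝ → ℝ, (∀ z, 0 ≤ f z) → ∀ x : ℝ, 0 < x →
      PhiStarE a b f x ≤ C * (locHL f x + Hop (2*a + b + 1) f (4*x) +
        ENNReal.ofReal (x ^ b) * Rop (fun z => z ^ (-b) * f z) x) := by
  set C : ℝ := max (2 ^ (|a + 1/2| + 1)) (max (2 ^ (2*a + 2*b) * 4 ^ (3*a + 2*b + 1/2))
    (2 * 4 ^ (a + b - 1/2) * 2 ^ (2*a + 2*b)))
  refine ⟨C.toNNReal, fun f hf x hx => iSup₂_le fun t (ht : 0 < t) => ?_⟩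
  rcases lt_or_ge t (x / 2) with h₁ | h₁
  · exact (lintegral_PhiE_le_locHL hab hf ht h₁).trans <| mul_le_mul'
      (ENNReal.ofReal_le_ofReal (le_max_left _ _)) (le_self_add.trans le_self_add)
  rcases le_or_gt t (3 * x) with h₂ | h₂
  · exact (lintegral_PhiE_le_Hop hab hf hx h₁ h₂).trans <| mul_le_mul'
      (ENNReal.ofReal_le_ofReal (le_max_of_le_right (le_max_left _ _)))
      (le_add_self.trans le_self_add)
  · exact (lintegral_PhiE_le_Rop hab hf hx h₂).trans <| mul_le_mul'
      (ENNReal.ofReal_le_ofReal (le_max_of_le_right (le_max_right _ _))) le_add_self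

theorem PhiStarF_le {a b : ℝ} (hab : 0 ≤ a + b) :
    ∃ C : ℝ≥0, ∀ f : ℝ → ℝ, (∀ z, 0 ≤ f z) → ∀ x : ℝ, 0 < x →
      PhiStarF a b f x ≤ C * ((if 1 ≤ b then Hop (2*a + 2) f (2*x) else 0) +
        (if b < 1 then Hop (2*a + b + 1) f (2*x) else 0) +
        Nop (2*a + 2) f x + Tmax (1 - b) f x) := by
  set C : ℝ := max 1 (max (2 ^ (2*a + b + 1) * 4 ^ (b - 1))
    (max (2 ^ (2 - 2*b)) (2 ^ (1 - b) * 2 ^ |2*a + b + 1|)))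
  refine ⟨C.toNNReal, fun f hf x hx => iSup₂_le fun t _ => ?_⟩
  have hC : (1 : ℝ≥0∞) ≤ ENNReal.ofReal C := ENNReal.one_le_ofReal.mpr (le_max_left _ _)
  rcases le_or_gt t x with hxt | hxt
  · rw [lintegral_PhiF_eq_zero hxt]
    exact zero_le
  rcases le_or_gt 1 b with hb | hb
  · exact (lintegral_PhiF_le_Nop hb hf hx hxt).trans <|
      (le_add_self.trans le_self_add).trans (le_mul_of_one_le_left zero_le hC)
  rw [if_neg hb.not_ge, if_pos hb, zero_add]
  rcases le_or_gt t (2 * x) with h₂ | h₂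
  · exact (lintegral_PhiF_le_Hop hab hb hf hx hxt.le h₂).trans <| mul_le_mul'
      (ENNReal.ofReal_le_ofReal (le_max_of_le_right (le_max_left _ _)))
      (le_self_add.trans le_self_add)
  · calc _ ≤ _ := lintegral_PhiF_le_Nop_add_Tmax hb hf hx h₂
      _ ≤ ENNReal.ofReal C * Nop (2*a + 2) f x + ENNReal.ofReal C * Tmax (1 - b) f x := by
        gcongr
        · exact le_max_of_le_right (le_max_of_le_right (le_max_left _ _))
        · exact le_max_of_le_right (le_max_of_le_right (le_max_right _ _))
      _ ≤ _ := by
        rw [← mul_add, add_assoc]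
        exact mul_le_mul' le_rfl le_add_self

theorem PhiStar_controlled (a b : ℝ) (hab : 1/2 ≤ a + b) :
    ∃ C : ℝ≥0, ∀ f : ℝ → ℝ, Measurable f → (∀ z, 0 ≤ f z) → ∀ x : ℝ, 0 < x →
      PhiStarE a b f x ≤
        C * (locHL f x + Hop (2*a + b + 1) f (4*x) +
          ENNReal.ofReal (x ^ b) * Rop (fun z => z ^ (-b) * f z) x) ∧
      PhiStarF a b f x ≤
        C * ((if 1 ≤ b then Hop (2*a + 2) f (2*x) else 0) +
          (if b < 1 then Hop (2*a + b + 1) f (2*x) else 0) +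
          Nop (2*a + 2) f x + Tmax (1 - b) f x) := by
  obtain ⟨C₁, hC₁⟩ := PhiStarE_le hab
  obtain ⟨C₂, hC₂⟩ := PhiStarF_le (a := a) (b := b) (by linarith)
  refine ⟨max C₁ C₂, fun f _ hf x hx => ⟨(hC₁ f hf x hx).trans ?_, (hC₂ f hf x hx).trans ?_⟩⟩
  · gcongr
    exact le_max_left _ _
  · gcongr
    exact le_max_right _ _
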